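/- arXiv:math/0506319 — 2 statements merged into one kernel-verified Lean document; each statement's English description precedes it below -/
import Mathlib

section
/- ∫_0^1 ∫_0^1 (−ln(xy))/(1 + x²y²) dx dy = π³/16. -/
open Real MeasureTheory intervalIntegral Set

lemma powLog_intervalIntegrable (m : ℕ) :
    IntervalIntegrable (fun x : ℝ => x ^ m * (-Real.log x)) volume 0 1 := by
  have hmeas : AEStronglyMeasurable (fun x : ℝ => x ^ m * (-Real.log x))
      (volume.restrict (Set.uIoc (0:ℝ) 1)) :=
    ((measurable_id.pow_const m).mul Real.measurable_log.neg).aestronglyMeasurable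
  have hg : IntervalIntegrable (fun x : ℝ => 2 * x ^ (-(1/2) : ℝ)) volume 0 1 :=
    (intervalIntegrable_rpow' (by norm_num)).const_mul 2
  refine hg.mono_fun hmeas ?_
  rw [Set.uIoc_of_le (zero_le_one' ℝ)]
  filter_upwards [ae_restrict_mem measurableSet_Ioc] with x hx
  have hx0 : 0 < x := hx.1
  have hx1 : x ≤ 1 := hx.2
  have hlog : -Real.log x ≤ 2 * x ^ (-(1/2) : ℝ) := by
    have h1 : Real.log (x ^ (-(1/2) : ℝ)) ≤ x ^ (-(1/2) : ℝ) - 1 :=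
      Real.log_le_sub_one_of_pos (Real.rpow_pos_of_pos hx0 _)
    rw [Real.log_rpow hx0] at h1
    nlinarith [Real.rpow_pos_of_pos hx0 (-(1/2) : ℝ)]
  have hnn : 0 ≤ -Real.log x := by
    simpa using Real.log_nonpos hx0.le hx1
  have hxm : x ^ m ≤ 1 := pow_le_one₀ hx0.le hx1
  rw [Real.norm_eq_abs, Real.norm_eq_abs, abs_of_nonneg (by positivity),
    abs_of_nonneg (by positivity)]
  calc x ^ m * (-Real.log x) ≤ 1 * (-Real.log x) := by
        exact mul_le_mul_of_nonneg_right hxm hnn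
    _ = -Real.log x := one_mul _
    _ ≤ 2 * x ^ (-(1/2) : ℝ) := hlog

lemma powLog_integral (m : ℕ) :
    ∫ x in (0:ℝ)..1, x ^ m * (-Real.log x) = 1 / (m + 1) ^ 2 := by
  have hm : (0:ℝ) < m + 1 := by positivity
  set G : ℝ → ℝ := fun x => x ^ (m + 1) * (1 / (m + 1) ^ 2) - x ^ m * (x * Real.log x) / (m + 1)
    with hG
  have hcont : ContinuousOn G (Set.Icc 0 1) := by
    apply Continuous.continuousOn
    exact ((continuous_pow (m+1)).mul continuous_const).sub
      (((continuous_pow m).mul Real.continuous_mul_log).div_const _)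
  have hderiv : ∀ x ∈ Set.Ioo (0:ℝ) 1, HasDerivAt G (x ^ m * (-Real.log x)) x := by
    intro x hx
    have hx0 : 0 < x := hx.1
    have h1 : HasDerivAt (fun x : ℝ => x ^ (m + 1) * Real.log x)
        (((m:ℝ) + 1) * x ^ m * Real.log x + x ^ (m + 1) * x⁻¹) x := by
      have : HasDerivAt (fun x : ℝ => x ^ (m + 1) * Real.log x)
          (↑(m + 1) * x ^ (m + 1 - 1) * Real.log x + x ^ (m + 1) * x⁻¹) x :=
        (hasDerivAt_pow (m + 1) x).mul (Real.hasDerivAt_log hx0.ne')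
      convert this using 1
      push_cast
      ring
    have h2 : HasDerivAt G
        ((((m:ℝ)+1) * x ^ m) * (1 / (m + 1) ^ 2)
          - (((m:ℝ) + 1) * x ^ m * Real.log x + x ^ (m + 1) * x⁻¹) / (m + 1)) x := by
      refine HasDerivAt.sub ?_ ?_
      · have : HasDerivAt (fun y : ℝ => y ^ (m + 1) * (1 / ((m:ℝ) + 1) ^ 2))
            (↑(m + 1) * x ^ (m + 1 - 1) * (1 / ((m:ℝ) + 1) ^ 2)) x :=
          (hasDerivAt_pow (m+1) x).mul_const (1 / ((m:ℝ) + 1) ^ 2)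
        convert this using 1 <;> push_cast <;> rfl
      have heq : (fun x : ℝ => x ^ m * (x * Real.log x) / (m + 1)) =
          (fun x : ℝ => x ^ (m + 1) * Real.log x / (m + 1)) := by
        funext y; rw [pow_succ]; ring
      rw [heq]
      exact h1.div_const _
    convert h2 using 1
    have hxinv : x ^ (m + 1) * x⁻¹ = x ^ m := by
      rw [pow_succ, mul_assoc, mul_inv_cancel₀ hx0.ne', mul_one]
    rw [hxinv]
    field_simp
    ring
  have := intervalIntegral.integral_eq_sub_of_hasDeriv_right_of_le (zero_le_one' ℝ)
    hcont (fun x hx => (hderiv x hx).hasDerivWithinAt) (powLog_intervalIntegrable m)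
  rw [this, hG]
  simp [zero_pow (Nat.succ_ne_zero m)]

lemma pow_integral01 (m : ℕ) : ∫ x in (0:ℝ)..1, x ^ m = 1 / (m + 1) := by
  rw [integral_pow]; norm_num

lemma inner_power_integral (m : ℕ) {x : ℝ} (hx : 0 < x) :
    ∫ y in (0:ℝ)..1, y ^ m * (-Real.log (x * y)) =
      (-Real.log x) / (m + 1) + 1 / (m + 1) ^ 2 := by
  have hcong : ∀ᵐ y ∂(volume : Measure ℝ), y ∈ Set.uIoc (0:ℝ) 1 →
      y ^ m * (-Real.log (x * y)) = y ^ m * (-Real.log x) + y ^ m * (-Real.log y) := by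
    refine Filter.Eventually.of_forall fun y hy => ?_
    rw [Set.uIoc_of_le (zero_le_one' ℝ)] at hy
    rw [Real.log_mul hx.ne' hy.1.ne']
    ring
  rw [intervalIntegral.integral_congr_ae hcong,
    intervalIntegral.integral_add ((intervalIntegral.intervalIntegrable_pow m).mul_const _)
      (powLog_intervalIntegrable m),
    intervalIntegral.integral_mul_const, integral_pow, powLog_integral]
  norm_num
  ring

noncomputable def Tk (k : ℕ) (x : ℝ) : ℝ :=
  x ^ (4*k) * ((-Real.log x) / (4*k+1) + 1 / (4*k+1) ^ 2)
    - x ^ (4*k+2) * ((-Real.log x) / (4*k+3) + 1 / (4*k+3) ^ 2)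

lemma hasSum_geom_log {t : ℝ} (ht0 : 0 < t) (ht1 : t < 1) :
    HasSum (fun k : ℕ => (t ^ (4*k) - t ^ (4*k+2)) * (-Real.log t))
      (-Real.log t / (1 + t ^ 2)) := by
  have ht4 : |t ^ 4| < 1 := by
    rw [abs_of_nonneg (by positivity)]
    exact pow_lt_one₀ ht0.le ht1 (by norm_num)
  have h := (hasSum_geometric_of_abs_lt_one ht4).mul_right ((1 - t^2) * (-Real.log t))
  have ht2 : (0:ℝ) < 1 - t^4 := by nlinarith [pow_lt_one₀ ht0.le ht1 (by norm_num : (4:ℕ) ≠ 0)]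
  have ht2' : (0:ℝ) < 1 + t^2 := by positivity
  have heq : (1 - t^4)⁻¹ * ((1 - t^2) * (-Real.log t)) = -Real.log t / (1 + t^2) := by
    field_simp
    ring
  rw [heq] at h
  convert h using 1
  · rfl
  funext k
  rw [← pow_mul]
  ring

lemma Tk_nonneg (k : ℕ) {x : ℝ} (hx0 : 0 < x) (hx1 : x ≤ 1) : 0 ≤ Tk k x := by
  unfold Tk
  have hL : 0 ≤ -Real.log x := by simpa using Real.log_nonpos hx0.le hx1
  have hp1 : (0:ℝ) < 4*k+1 := by positivity
  have hp3 : (0:ℝ) < 4*k+3 := by positivity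
  have hxp : x ^ (4*k+2) ≤ x ^ (4*k) :=
    pow_le_pow_of_le_one hx0.le hx1 (by omega)
  have hAB : (-Real.log x) / (4*k+3) + 1 / (4*k+3) ^ 2
      ≤ (-Real.log x) / (4*k+1) + 1 / (4*k+1) ^ 2 := by
    gcongr <;> linarith
  have hB : 0 ≤ (-Real.log x) / (4*k+3) + 1 / (4*k+3) ^ 2 := by positivity
  have hx0' : (0:ℝ) ≤ x ^ (4*k) := by positivity
  nlinarith [mul_le_mul_of_nonneg_left hAB hx0',
    mul_le_mul_of_nonneg_right hxp hB]

lemma Tk_le (k : ℕ) {x : ℝ} (hx0 : 0 < x) (hx1 : x ≤ 1) :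
    Tk k x ≤ (x ^ 4) ^ k * (1 + (-Real.log x)) := by
  unfold Tk
  have hL : 0 ≤ -Real.log x := by simpa using Real.log_nonpos hx0.le hx1
  have hp1 : (1:ℝ) ≤ 4*k+1 := by norm_num
  have hA : (-Real.log x) / (4*k+1) + 1 / (4*k+1) ^ 2 ≤ 1 + (-Real.log x) := by
    have h1 : (-Real.log x) / (4*k+1) ≤ -Real.log x := by
      rw [div_le_iff₀ (by positivity)]
      nlinarith
    have h2 : (1:ℝ) / (4*k+1) ^ 2 ≤ 1 := by
      rw [div_le_one (by positivity)]
      nlinarith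
    linarith
  have hB : 0 ≤ x ^ (4*k+2) * ((-Real.log x) / (4*k+3) + 1 / (4*k+3) ^ 2) := by positivity
  have hx0' : (0:ℝ) ≤ x ^ (4*k) := by positivity
  rw [← pow_mul]
  nlinarith [mul_le_mul_of_nonneg_left hA hx0']

lemma Tk_intervalIntegrable (k : ℕ) : IntervalIntegrable (Tk k) volume 0 1 := by
  unfold Tk
  apply IntervalIntegrable.sub
  · have : (fun x : ℝ => x ^ (4*k) * ((-Real.log x) / (4*k+1) + 1 / (4*k+1) ^ 2)) =
        (fun x : ℝ => (x ^ (4*k) * (-Real.log x)) * (1 / (4*k+1))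
          + x ^ (4*k) * (1 / (4*k+1) ^ 2)) := by
      funext x; ring
    rw [this]
    exact ((powLog_intervalIntegrable (4*k)).mul_const _).add
      ((intervalIntegral.intervalIntegrable_pow _).mul_const _)
  · have : (fun x : ℝ => x ^ (4*k+2) * ((-Real.log x) / (4*k+3) + 1 / (4*k+3) ^ 2)) =
        (fun x : ℝ => (x ^ (4*k+2) * (-Real.log x)) * (1 / (4*k+3))
          + x ^ (4*k+2) * (1 / (4*k+3) ^ 2)) := by
      funext x; ring
    rw [this]
    exact ((powLog_intervalIntegrable (4*k+2)).mul_const _).add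
      ((intervalIntegral.intervalIntegrable_pow _).mul_const _)

lemma Tk_integral (k : ℕ) :
    ∫ x in (0:ℝ)..1, Tk k x = 2 / (4*k+1) ^ 3 - 2 / (4*k+3) ^ 3 := by
  unfold Tk
  have h1 : (fun x : ℝ => x ^ (4*k) * ((-Real.log x) / (4*k+1) + 1 / (4*k+1) ^ 2)
      - x ^ (4*k+2) * ((-Real.log x) / (4*k+3) + 1 / (4*k+3) ^ 2)) =
      (fun x : ℝ => ((x ^ (4*k) * (-Real.log x)) * (1 / (4*k+1))
          + x ^ (4*k) * (1 / (4*k+1) ^ 2))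
        - ((x ^ (4*k+2) * (-Real.log x)) * (1 / (4*k+3))
          + x ^ (4*k+2) * (1 / (4*k+3) ^ 2))) := by
    funext x; ring
  rw [h1, intervalIntegral.integral_sub, intervalIntegral.integral_add,
    intervalIntegral.integral_add, intervalIntegral.integral_mul_const,
    intervalIntegral.integral_mul_const, intervalIntegral.integral_mul_const,
    intervalIntegral.integral_mul_const, powLog_integral, powLog_integral,
    integral_pow, integral_pow]
  · push_cast
    have e1 : ((4:ℝ)*k+1) ≠ 0 := by positivity
    have e3 : ((4:ℝ)*k+3) ≠ 0 := by positivity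
    have : ((4:ℝ)*k+2+1) = 4*k+3 := by ring
    rw [this]
    field_simp
    ring
  · exact (powLog_intervalIntegrable _).mul_const _
  · exact (intervalIntegral.intervalIntegrable_pow _).mul_const _
  · exact (powLog_intervalIntegrable _).mul_const _
  · exact (intervalIntegral.intervalIntegrable_pow _).mul_const _
  · exact ((powLog_intervalIntegrable _).mul_const _).add
      ((intervalIntegral.intervalIntegrable_pow _).mul_const _)
  · exact ((powLog_intervalIntegrable _).mul_const _).add
      ((intervalIntegral.intervalIntegrable_pow _).mul_const _)

lemma inner_power_intervalIntegrable (m : ℕ) {x : ℝ} (hx : 0 < x) :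
    IntervalIntegrable (fun y : ℝ => y ^ m * (-Real.log (x*y))) volume 0 1 := by
  have h : IntervalIntegrable
      (fun y : ℝ => y ^ m * (-Real.log x) + y ^ m * (-Real.log y)) volume 0 1 :=
    ((intervalIntegral.intervalIntegrable_pow m).mul_const _).add
      (powLog_intervalIntegrable m)
  rw [intervalIntegrable_iff, Set.uIoc_of_le (zero_le_one' ℝ)] at h ⊢
  refine h.congr_fun (fun y hy => ?_) measurableSet_Ioc
  rw [Real.log_mul hx.ne' hy.1.ne']
  ring

lemma inner_eq {x : ℝ} (hx0 : 0 < x) (hx1 : x < 1) :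
    (∫ y in (0:ℝ)..1, -Real.log (x * y) / (1 + x ^ 2 * y ^ 2)) = ∑' k, Tk k x := by
  set F : ℕ → ℝ → ℝ := fun k y => ((x*y) ^ (4*k) - (x*y) ^ (4*k+2)) * (-Real.log (x*y))
    with hF
  -- each F k is integrable on Ioc 0 1 and its interval integral equals Tk k x
  have hFeq : ∀ k, (F k) = (fun y : ℝ => x ^ (4*k) * (y ^ (4*k) * (-Real.log (x*y)))
      - x ^ (4*k+2) * (y ^ (4*k+2) * (-Real.log (x*y)))) := by
    intro k
    funext y
    simp only [hF, mul_pow]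
    ring
  have hFint : ∀ k, IntervalIntegrable (F k) volume 0 1 := by
    intro k
    rw [hFeq k]
    exact ((inner_power_intervalIntegrable (4*k) hx0).const_mul _).sub
      ((inner_power_intervalIntegrable (4*k+2) hx0).const_mul _)
  have hFval : ∀ k, ∫ y in (0:ℝ)..1, F k y = Tk k x := by
    intro k
    rw [hFeq k, intervalIntegral.integral_sub
        ((inner_power_intervalIntegrable (4*k) hx0).const_mul _)
        ((inner_power_intervalIntegrable (4*k+2) hx0).const_mul _),
      intervalIntegral.integral_const_mul, intervalIntegral.integral_const_mul,
      inner_power_integral (4*k) hx0, inner_power_integral (4*k+2) hx0]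
    unfold Tk
    push_cast
    ring_nf
  have hFnonneg : ∀ k, ∀ y ∈ Set.Ioc (0:ℝ) 1, 0 ≤ F k y := by
    intro k y hy
    have ht0 : 0 < x * y := mul_pos hx0 hy.1
    have ht1 : x * y ≤ 1 := by nlinarith [hy.2, hx1.le, hy.1.le]
    have h1 : (x*y) ^ (4*k+2) ≤ (x*y) ^ (4*k) :=
      pow_le_pow_of_le_one ht0.le ht1 (by omega)
    have h2 : 0 ≤ -Real.log (x*y) := by simpa using Real.log_nonpos ht0.le ht1
    simp only [hF]
    nlinarith
  -- rewrite interval integrals as set integrals over Ioc 0 1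
  rw [intervalIntegral.integral_of_le (zero_le_one' ℝ)]
  -- pointwise series identity on Ioc 0 1
  have hpt : ∀ y ∈ Set.Ioc (0:ℝ) 1,
      -Real.log (x * y) / (1 + x ^ 2 * y ^ 2) = ∑' k, F k y := by
    intro y hy
    have ht0 : 0 < x * y := mul_pos hx0 hy.1
    have ht1 : x * y < 1 := by nlinarith [hy.2, hy.1]
    have := (hasSum_geom_log ht0 ht1).tsum_eq
    rw [this, mul_pow]
  rw [MeasureTheory.setIntegral_congr_fun measurableSet_Ioc hpt]
  -- interchange sum and integral
  have hint : ∀ k, Integrable (F k) (volume.restrict (Set.Ioc (0:ℝ) 1)) := by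
    intro k
    have h := intervalIntegrable_iff.mp (hFint k)
    rwa [Set.uIoc_of_le (zero_le_one' ℝ)] at h
  have hnormval : ∀ k, (∫ y in Set.Ioc (0:ℝ) 1, ‖F k y‖) = Tk k x := by
    intro k
    rw [MeasureTheory.setIntegral_congr_fun measurableSet_Ioc
      (fun y hy => Real.norm_of_nonneg (hFnonneg k y hy)),
      ← intervalIntegral.integral_of_le (zero_le_one' ℝ)]
    exact hFval k
  have hsum : Summable fun k => ∫ y in Set.Ioc (0:ℝ) 1, ‖F k y‖ := by
    rw [funext hnormval]
    refine Summable.of_nonneg_of_le (fun k => Tk_nonneg k hx0 hx1.le)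
      (fun k => Tk_le k hx0 hx1.le) ?_
    exact (summable_geometric_of_lt_one (by positivity)
      (pow_lt_one₀ hx0.le hx1 (by norm_num))).mul_right _
  rw [← MeasureTheory.integral_tsum_of_summable_integral_norm hint hsum]
  refine tsum_congr fun k => ?_
  rw [← intervalIntegral.integral_of_le (zero_le_one' ℝ)]
  exact hFval k

lemma aux_le (k : ℕ) (c : ℝ) (hc : 1 ≤ c) (hc4 : c ≤ 4) :
    2 / (4*(k:ℝ)+c) ^ 3 ≤ 2 * ((k:ℝ)+1) ^ (-3 : ℝ) := by
  have h3 : ((k:ℝ)+1) ^ (-3 : ℝ) = (((k:ℝ)+1) ^ 3)⁻¹ := by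
    rw [Real.rpow_neg (by positivity), ← Real.rpow_natCast ((k:ℝ)+1) 3]
    norm_num
  rw [h3, ← div_eq_mul_inv]
  have hk : (0:ℝ) ≤ k := Nat.cast_nonneg k
  gcongr
  linarith

lemma summable_f : Summable (fun k : ℕ => 2 / (4*(k:ℝ)+1) ^ 3 - 2 / (4*(k:ℝ)+3) ^ 3) := by
  have base : Summable (fun n : ℕ => 2 * ((n:ℝ)+1) ^ (-3 : ℝ)) := by
    have b0 : Summable (fun n : ℕ => ((n:ℝ)) ^ (-3 : ℝ)) :=
      (Real.summable_nat_rpow (p := (-3:ℝ))).mpr (by norm_num)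
    have b1 : Summable (fun n : ℕ => (((n + 1 : ℕ)):ℝ) ^ (-3 : ℝ)) :=
      (summable_nat_add_iff 1).mpr b0
    have b2 : Summable (fun n : ℕ => ((n:ℝ)+1) ^ (-3 : ℝ)) :=
      b1.congr fun n => by push_cast; ring_nf
    exact b2.mul_left 2
  have h1 : Summable (fun k : ℕ => 2 / (4*(k:ℝ)+1) ^ 3) :=
    Summable.of_nonneg_of_le (fun k => by positivity)
      (fun k => aux_le k 1 le_rfl (by norm_num)) base
  have h3 : Summable (fun k : ℕ => 2 / (4*(k:ℝ)+3) ^ 3) :=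
    Summable.of_nonneg_of_le (fun k => by positivity)
      (fun k => aux_le k 3 (by norm_num) (by norm_num)) base
  exact h1.sub h3

lemma key_hasSum :
    HasSum (fun k : ℕ => 2 / (4*(k:ℝ)+1) ^ 3 - 2 / (4*(k:ℝ)+3) ^ 3)
      (Real.pi ^ 3 / 16) := by
  set f : ℕ → ℝ := fun k => 2 / (4*(k:ℝ)+1) ^ 3 - 2 / (4*(k:ℝ)+3) ^ 3 with hf
  set g : ℕ → ℝ := fun n => 2 * ((1:ℝ) / (n:ℝ) ^ 3 * Real.sin (π * n / 2)) with hg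
  have hgsum : HasSum g (π ^ 3 / 16) := by
    have := hasSum_L_function_mod_four_eval_three.mul_left 2
    convert this using 1
    · rfl
    ring
  -- values of g on residues mod 4
  have hg0 : ∀ k : ℕ, g (4*k) = 0 := by
    intro k
    have : π * (4*k : ℕ) / 2 = ((2*k : ℕ) : ℝ) * π := by push_cast; ring
    simp only [hg, this, Real.sin_nat_mul_pi, mul_zero, zero_mul]
  have hg2 : ∀ k : ℕ, g (4*k+2) = 0 := by
    intro k
    have : π * (4*k+2 : ℕ) / 2 = ((2*k+1 : ℕ) : ℝ) * π := by push_cast; ring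
    simp only [hg, this, Real.sin_nat_mul_pi, mul_zero, zero_mul]
  have hg1 : ∀ k : ℕ, g (4*k+1) = 2 / (4*(k:ℝ)+1) ^ 3 := by
    intro k
    have h : π * (4*k+1 : ℕ) / 2 = π/2 + (k : ℕ) * (2 * π) := by push_cast; ring
    simp only [hg, h, Real.sin_add_nat_mul_two_pi, Real.sin_pi_div_two]
    push_cast
    ring
  have hg3 : ∀ k : ℕ, g (4*k+3) = -(2 / (4*(k:ℝ)+3) ^ 3) := by
    intro k
    have h : π * (4*k+3 : ℕ) / 2 = π/2 + π + (k : ℕ) * (2 * π) := by push_cast; ring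
    simp only [hg, h, Real.sin_add_nat_mul_two_pi, Real.sin_add_pi, Real.sin_pi_div_two]
    push_cast
    ring
  have hblock : ∀ K : ℕ, ∑ k ∈ Finset.range K, f k = ∑ n ∈ Finset.range (4*K), g n := by
    intro K
    induction K with
    | zero => simp
    | succ K ih =>
      have h4 : 4*(K+1) = (4*K) + 1 + 1 + 1 + 1 := by ring
      rw [Finset.sum_range_succ, ih, h4, Finset.sum_range_succ, Finset.sum_range_succ,
        Finset.sum_range_succ, Finset.sum_range_succ]
      have e0 := hg0 K
      have e1 := hg1 K
      have e2 := hg2 K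
      have e3 := hg3 K
      have r1 : 4*K+1+1 = 4*K+2 := by ring
      have r2 : 4*K+1+1+1 = 4*K+3 := by ring
      rw [r1] at *
      rw [r2] at *
      rw [e0, e1, e2, e3]
      simp only [hf]
      ring
  have hfs : Summable f := summable_f
  have ht1 : Filter.Tendsto (fun K => ∑ k ∈ Finset.range K, f k) Filter.atTop
      (nhds (∑' k, f k)) := hfs.hasSum.tendsto_sum_nat
  have ht2 : Filter.Tendsto (fun K => ∑ n ∈ Finset.range (4*K), g n) Filter.atTop
      (nhds (π ^ 3 / 16)) := by
    refine hgsum.tendsto_sum_nat.comp ?_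
    exact Filter.tendsto_atTop_mono (fun n => by simp only [id_eq]; omega) Filter.tendsto_id
  rw [funext hblock] at ht1
  have : (∑' k, f k) = π ^ 3 / 16 := tendsto_nhds_unique ht1 ht2
  exact this ▸ hfs.hasSum

theorem double_integral_pi_cubed :
    (∫ x in (0:ℝ)..1, ∫ y in (0:ℝ)..1, -Real.log (x * y) / (1 + x ^ 2 * y ^ 2)) =
      Real.pi ^ 3 / 16 := by
  rw [intervalIntegral.integral_of_le (zero_le_one' ℝ)]
  have hae : ∀ᵐ x ∂(volume : Measure ℝ), x ∈ Set.Ioc (0:ℝ) 1 →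
      (∫ y in (0:ℝ)..1, -Real.log (x*y)/(1+x^2*y^2)) = ∑' k, Tk k x := by
    have hne : ∀ᵐ x ∂(volume : Measure ℝ), x ∉ ({1} : Set ℝ) :=
      measure_eq_zero_iff_ae_notMem.mp (measure_singleton 1)
    filter_upwards [hne] with x hx hmem
    exact inner_eq hmem.1 (lt_of_le_of_ne hmem.2 (by simpa using hx))
  rw [MeasureTheory.setIntegral_congr_ae measurableSet_Ioc hae]
  have hint : ∀ k, Integrable (Tk k) (volume.restrict (Set.Ioc (0:ℝ) 1)) := by
    intro k
    have h := intervalIntegrable_iff.mp (Tk_intervalIntegrable k)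
    rwa [Set.uIoc_of_le (zero_le_one' ℝ)] at h
  have hval : ∀ k : ℕ, (∫ x in Set.Ioc (0:ℝ) 1, Tk k x) =
      2 / (4*(k:ℝ)+1) ^ 3 - 2 / (4*(k:ℝ)+3) ^ 3 := by
    intro k
    rw [← intervalIntegral.integral_of_le (zero_le_one' ℝ)]
    rw [Tk_integral k]
  have hnormval : ∀ k : ℕ, (∫ x in Set.Ioc (0:ℝ) 1, ‖Tk k x‖) =
      2 / (4*(k:ℝ)+1) ^ 3 - 2 / (4*(k:ℝ)+3) ^ 3 := by
    intro k
    rw [MeasureTheory.setIntegral_congr_fun measurableSet_Ioc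
      (fun x hx => Real.norm_of_nonneg (Tk_nonneg k hx.1 hx.2))]
    exact hval k
  have hsum : Summable fun k => ∫ x in Set.Ioc (0:ℝ) 1, ‖Tk k x‖ := by
    rw [funext hnormval]
    exact summable_f
  rw [← MeasureTheory.integral_tsum_of_summable_integral_norm hint hsum, funext hval]
  exact key_hasSum.tsum_eq
end

section
/- ∫_0^1 ∫_0^1 y/(1 − x³y³) dx dy = π/(3√3). -/
open Real Set Filter MeasureTheory intervalIntegral
open scoped Topology

noncomputable def Faux (u : ℝ) : ℝ :=
  (-Real.log (1 - u) + Real.log (u ^ 2 + u + 1) / 2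
    - Real.sqrt 3 * Real.arctan ((2 * u + 1) / Real.sqrt 3)
    + Real.sqrt 3 * (Real.pi / 6)) / 3

noncomputable def Caux (x : ℝ) : ℝ :=
  (-Real.log (1 - x) + Real.log (x ^ 2 + x + 1) / 2
    + Real.sqrt 3 * Real.arctan ((2 * x + 1) / Real.sqrt 3)) / 3

noncomputable def Haux (x : ℝ) : ℝ := -Faux x / x + Caux x

lemma sqrt3_pos : 0 < Real.sqrt 3 := Real.sqrt_pos.mpr (by norm_num)

lemma sqrt3_sq : Real.sqrt 3 ^ 2 = 3 := Real.sq_sqrt (by norm_num)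

lemma quad_pos (u : ℝ) : 0 < u ^ 2 + u + 1 := by nlinarith [sq_nonneg (2 * u + 1)]

lemma arctan_term_key (u : ℝ) :
    Real.sqrt 3 * (1 / (1 + ((2 * u + 1) / Real.sqrt 3) ^ 2) * (2 / Real.sqrt 3)) =
      3 / (2 * (u ^ 2 + u + 1)) := by
  have hq := quad_pos u
  have hs := sqrt3_pos
  have h1 : (0:ℝ) < 1 + ((2 * u + 1) / Real.sqrt 3) ^ 2 := by positivity
  rw [div_pow, sqrt3_sq]
  field_simp
  rw [eq_div_iff (by nlinarith : u * (u + 1) + 1 ≠ 0)]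
  ring

lemma hasDerivAt_quad (u : ℝ) : HasDerivAt (fun u : ℝ => u ^ 2 + u + 1) (2 * u + 1) u := by
  have h := ((hasDerivAt_pow 2 u).add (hasDerivAt_id u)).add_const 1
  simpa using h

lemma hasDerivAt_lin (u : ℝ) :
    HasDerivAt (fun u : ℝ => (2 * u + 1) / Real.sqrt 3) (2 / Real.sqrt 3) u := by
  have h : HasDerivAt (fun u : ℝ => 2 * u + 1) 2 u := by
    simpa using ((hasDerivAt_id u).const_mul 2).add_const 1
  exact h.div_const _

lemma hasDerivAt_Faux {u : ℝ} (hu : u < 1) : HasDerivAt Faux (u / (1 - u ^ 3)) u := by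
  have h1u : (1:ℝ) - u ≠ 0 := by intro h; nlinarith
  have hq := quad_pos u
  have hcube : (1:ℝ) - u ^ 3 ≠ 0 := by nlinarith
  have d1 : HasDerivAt (fun u : ℝ => Real.log (1 - u)) ((1 - u)⁻¹ * (-1)) u :=
    (Real.hasDerivAt_log h1u).comp u ((hasDerivAt_id u).const_sub 1)
  have d2 : HasDerivAt (fun u : ℝ => Real.log (u ^ 2 + u + 1))
      ((u ^ 2 + u + 1)⁻¹ * (2 * u + 1)) u :=
    by have := (Real.hasDerivAt_log hq.ne').comp u (hasDerivAt_quad u); exact this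
  have d3 : HasDerivAt (fun u : ℝ => Real.arctan ((2 * u + 1) / Real.sqrt 3))
      (1 / (1 + ((2 * u + 1) / Real.sqrt 3) ^ 2) * (2 / Real.sqrt 3)) u :=
    (Real.hasDerivAt_arctan _).comp u (hasDerivAt_lin u)
  have h := (((d1.neg.add (d2.div_const 2)).sub (d3.const_mul (Real.sqrt 3))).add_const
      (Real.sqrt 3 * (Real.pi / 6))).div_const 3
  convert h using 1
  · rfl
  · rfl
  · rfl
  rw [arctan_term_key]
  have hq2 : u * (u + 1) + 1 ≠ 0 := by nlinarith
  field_simp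
  ring

lemma arctan_inv_sqrt3 : Real.arctan (1 / Real.sqrt 3) = Real.pi / 6 := by
  rw [← Real.tan_pi_div_six]
  exact Real.arctan_tan (by linarith [Real.pi_pos]) (by linarith [Real.pi_pos])

lemma arctan_sqrt3 : Real.arctan (Real.sqrt 3) = Real.pi / 3 := by
  rw [← Real.tan_pi_div_three]
  exact Real.arctan_tan (by linarith [Real.pi_pos]) (by linarith [Real.pi_pos])

lemma Faux_zero : Faux 0 = 0 := by
  have h : (2 * (0:ℝ) + 1) / Real.sqrt 3 = 1 / Real.sqrt 3 := by norm_num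
  simp only [Faux, h, arctan_inv_sqrt3]
  norm_num

lemma inner_eq_s12 {x : ℝ} (hx : x ∈ Set.Ioo (0:ℝ) 1) :
    (∫ y in (0:ℝ)..1, y / (1 - x ^ 3 * y ^ 3)) = Faux x / x ^ 2 := by
  obtain ⟨hx0, hx1⟩ := hx
  have hden : ∀ y ∈ Set.Icc (0:ℝ) 1, (1:ℝ) - x ^ 3 * y ^ 3 ≠ 0 := by
    intro y hy
    obtain ⟨hy0, hy1⟩ := hy
    have hy3 : y ^ 3 ≤ 1 := pow_le_one₀ hy0 hy1
    have hx3 : x ^ 3 < 1 := pow_lt_one₀ hx0.le hx1 (by norm_num)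
    have hx3' : 0 < x ^ 3 := by positivity
    have : x ^ 3 * y ^ 3 ≤ x ^ 3 := by nlinarith [pow_nonneg hy0 3]
    nlinarith
  have hderiv : ∀ y ∈ Set.uIcc (0:ℝ) 1,
      HasDerivAt (fun y => Faux (x * y) / x ^ 2) (y / (1 - x ^ 3 * y ^ 3)) y := by
    intro y hy
    rw [Set.uIcc_of_le zero_le_one] at hy
    obtain ⟨hy0, hy1⟩ := hy
    have hxy : x * y < 1 := by nlinarith
    have h := ((hasDerivAt_Faux hxy).comp y ((hasDerivAt_id y).const_mul x)).div_const (x ^ 2)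
    convert h using 1
    · rfl
    · rfl
    · rfl
    have hne := hden y ⟨hy0, hy1⟩
    have h3 : (x * y) ^ 3 = x ^ 3 * y ^ 3 := by ring
    rw [h3]
    field_simp
  have hint : IntervalIntegrable (fun y => y / (1 - x ^ 3 * y ^ 3)) volume 0 1 := by
    apply ContinuousOn.intervalIntegrable
    apply ContinuousOn.div (continuousOn_id) (by fun_prop)
    intro y hy
    rw [Set.uIcc_of_le zero_le_one] at hy
    exact hden y hy
  rw [intervalIntegral.integral_eq_sub_of_hasDerivAt hderiv hint]
  simp [Faux_zero]

lemma hasDerivAt_Haux {x : ℝ} (hx : x ∈ Set.Ioo (0:ℝ) 1) :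
    HasDerivAt Haux (Faux x / x ^ 2) x := by
  obtain ⟨hx0, hx1⟩ := hx
  have h1u : (1:ℝ) - x ≠ 0 := by intro h; nlinarith
  have hq := quad_pos x
  have hcube : (1:ℝ) - x ^ 3 ≠ 0 := by nlinarith
  have hF := hasDerivAt_Faux hx1
  have hdiv : HasDerivAt (fun x => -Faux x / x)
      ((-(x / (1 - x ^ 3)) * x - -Faux x * 1) / x ^ 2) x :=
    hF.neg.div (hasDerivAt_id x) hx0.ne'
  have d1 : HasDerivAt (fun u : ℝ => Real.log (1 - u)) ((1 - x)⁻¹ * (-1)) x :=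
    (Real.hasDerivAt_log h1u).comp x ((hasDerivAt_id x).const_sub 1)
  have d2 : HasDerivAt (fun u : ℝ => Real.log (u ^ 2 + u + 1))
      ((x ^ 2 + x + 1)⁻¹ * (2 * x + 1)) x :=
    by have := (Real.hasDerivAt_log hq.ne').comp x (hasDerivAt_quad x); exact this
  have d3 : HasDerivAt (fun u : ℝ => Real.arctan ((2 * u + 1) / Real.sqrt 3))
      (1 / (1 + ((2 * x + 1) / Real.sqrt 3) ^ 2) * (2 / Real.sqrt 3)) x :=
    (Real.hasDerivAt_arctan _).comp x (hasDerivAt_lin x)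
  have hC : HasDerivAt Caux
      ((-((1 - x)⁻¹ * (-1)) + (x ^ 2 + x + 1)⁻¹ * (2 * x + 1) / 2 +
        Real.sqrt 3 * (1 / (1 + ((2 * x + 1) / Real.sqrt 3) ^ 2) * (2 / Real.sqrt 3))) / 3) x :=
    ((d1.neg.add (d2.div_const 2)).add (d3.const_mul (Real.sqrt 3))).div_const 3
  have h := hdiv.add hC
  convert h using 1
  · rfl
  · rfl
  · rfl
  rw [arctan_term_key]
  field_simp
  ring

lemma contCaux {x : ℝ} (hx : (1:ℝ) - x ≠ 0) : ContinuousAt Caux x := by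
  have h1 : ContinuousAt (fun x : ℝ => Real.log (1 - x)) x :=
    ContinuousAt.log (by fun_prop) hx
  have h2 : ContinuousAt (fun x : ℝ => Real.log (x ^ 2 + x + 1)) x :=
    ContinuousAt.log (by fun_prop) (quad_pos x).ne'
  have h3 : ContinuousAt (fun x : ℝ => Real.arctan ((2 * x + 1) / Real.sqrt 3)) x :=
    Real.continuousAt_arctan.comp (by fun_prop)
  exact ((h1.neg.add (h2.div_const 2)).add (continuousAt_const.mul h3)).div_const 3

lemma tendsto_Faux_div_zero : Filter.Tendsto (fun x => Faux x / x) (𝓝[≠] (0:ℝ)) (𝓝 0) := by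
  have h := hasDerivAt_iff_tendsto_slope.mp (hasDerivAt_Faux (show (0:ℝ) < 1 by norm_num))
  have h0 : (0:ℝ) / (1 - 0 ^ 3) = 0 := by norm_num
  rw [h0] at h
  refine h.congr fun x => ?_
  simp [slope_def_field, Faux_zero]

lemma tendsto_Haux_zero : Filter.Tendsto Haux (𝓝[≠] (0:ℝ)) (𝓝 (Haux 0)) := by
  have h1 : Filter.Tendsto (fun x => -Faux x / x) (𝓝[≠] (0:ℝ)) (𝓝 0) := by
    have := tendsto_Faux_div_zero.neg
    rw [neg_zero] at this
    exact this.congr fun x => (neg_div _ _).symm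
  have h2 : Filter.Tendsto Caux (𝓝[≠] (0:ℝ)) (𝓝 (Caux 0)) :=
    ((contCaux (by norm_num)).tendsto).mono_left nhdsWithin_le_nhds
  have hval : Haux 0 = 0 + Caux 0 := by simp [Haux, Faux_zero]
  rw [hval]
  exact h1.add h2

lemma tendsto_Haux_one : Filter.Tendsto Haux (𝓝[<] (1:ℝ)) (𝓝 (Haux 1)) := by
  have hs := sqrt3_pos
  -- D is a rewriting of Haux that is amenable near 1
  set D : ℝ → ℝ := fun x =>
    Real.log (1 - x) * (1 - x) / (3 * x) +
      ((Real.log (x ^ 2 + x + 1) / 2 + Real.sqrt 3 * Real.arctan ((2 * x + 1) / Real.sqrt 3)) / 3 +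
       (-(Real.log (x ^ 2 + x + 1) / 2) + Real.sqrt 3 * Real.arctan ((2 * x + 1) / Real.sqrt 3) -
          Real.sqrt 3 * (Real.pi / 6)) / (3 * x)) with hD
  have heq : ∀ x : ℝ, x ≠ 0 → Haux x = D x := by
    intro x hx
    simp only [hD, Haux, Faux, Caux]
    field_simp
    ring
  have hmem : Set.Ioo (0:ℝ) 1 ∈ 𝓝[<] (1:ℝ) :=
    Ioo_mem_nhdsLT_of_mem (by constructor <;> norm_num)
  have hee : Haux =ᶠ[𝓝[<] (1:ℝ)] D := by
    filter_upwards [hmem] with x hx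
    exact heq x hx.1.ne'
  -- limit of the first (log) term is 0
  have hsub : Filter.Tendsto (fun x : ℝ => 1 - x) (𝓝[<] (1:ℝ)) (𝓝[>] (0:ℝ)) := by
    apply tendsto_nhdsWithin_of_tendsto_nhds_of_eventually_within
    · have hc : Continuous (fun x : ℝ => 1 - x) := by fun_prop
      have : Filter.Tendsto (fun x : ℝ => 1 - x) (𝓝 (1:ℝ)) (𝓝 0) := by
        simpa using hc.tendsto (1:ℝ)
      exact this.mono_left nhdsWithin_le_nhds
    · filter_upwards [self_mem_nhdsWithin] with x hx
      simp only [Set.mem_Iio] at hx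
      simp only [Set.mem_Ioi]
      linarith
  have hlogmul : Filter.Tendsto (fun t : ℝ => Real.log t * t) (𝓝[>] (0:ℝ)) (𝓝 0) := by
    have h := tendsto_log_mul_rpow_nhdsGT_zero one_pos
    refine h.congr fun x => ?_
    rw [Real.rpow_one]
  have h1 : Filter.Tendsto (fun x : ℝ => Real.log (1 - x) * (1 - x) / (3 * x))
      (𝓝[<] (1:ℝ)) (𝓝 0) := by
    have hnum : Filter.Tendsto (fun x : ℝ => Real.log (1 - x) * (1 - x))
        (𝓝[<] (1:ℝ)) (𝓝 0) := hlogmul.comp hsub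
    have hden : Filter.Tendsto (fun x : ℝ => 3 * x) (𝓝[<] (1:ℝ)) (𝓝 3) := by
      have hc : Continuous (fun x : ℝ => 3 * x) := by fun_prop
      have : Filter.Tendsto (fun x : ℝ => 3 * x) (𝓝 (1:ℝ)) (𝓝 3) := by
        simpa using hc.tendsto (1:ℝ)
      exact this.mono_left nhdsWithin_le_nhds
    have := hnum.div hden (by norm_num)
    rw [zero_div] at this; exact this
  -- limit of the remaining part by continuity at 1
  have h2 : Filter.Tendsto (fun x : ℝ =>
      (Real.log (x ^ 2 + x + 1) / 2 + Real.sqrt 3 * Real.arctan ((2 * x + 1) / Real.sqrt 3)) / 3 +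
       (-(Real.log (x ^ 2 + x + 1) / 2) + Real.sqrt 3 * Real.arctan ((2 * x + 1) / Real.sqrt 3) -
          Real.sqrt 3 * (Real.pi / 6)) / (3 * x)) (𝓝[<] (1:ℝ))
      (𝓝 ((Real.log (1 ^ 2 + 1 + 1) / 2 +
            Real.sqrt 3 * Real.arctan ((2 * 1 + 1) / Real.sqrt 3)) / 3 +
          (-(Real.log (1 ^ 2 + 1 + 1) / 2) +
            Real.sqrt 3 * Real.arctan ((2 * 1 + 1) / Real.sqrt 3) -
            Real.sqrt 3 * (Real.pi / 6)) / (3 * 1))) := by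
    have hc : ContinuousAt (fun x : ℝ =>
        (Real.log (x ^ 2 + x + 1) / 2 + Real.sqrt 3 * Real.arctan ((2 * x + 1) / Real.sqrt 3)) / 3 +
        (-(Real.log (x ^ 2 + x + 1) / 2) + Real.sqrt 3 * Real.arctan ((2 * x + 1) / Real.sqrt 3) -
          Real.sqrt 3 * (Real.pi / 6)) / (3 * x)) 1 := by
      have hlog : ContinuousAt (fun x : ℝ => Real.log (x ^ 2 + x + 1)) 1 :=
        ContinuousAt.log (by fun_prop) (quad_pos 1).ne'
      have hat : ContinuousAt (fun x : ℝ => Real.arctan ((2 * x + 1) / Real.sqrt 3)) 1 :=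
        Real.continuousAt_arctan.comp (by fun_prop)
      exact (((hlog.div_const 2).add (continuousAt_const.mul hat)).div_const 3).add
        ((((hlog.div_const 2).neg.add (continuousAt_const.mul hat)).sub continuousAt_const).div
          (continuousAt_const.mul continuousAt_id) (by norm_num))
    exact hc.tendsto.mono_left nhdsWithin_le_nhds
  have hD1 : Haux 1 = 0 + ((Real.log ((1:ℝ) ^ 2 + 1 + 1) / 2 +
        Real.sqrt 3 * Real.arctan ((2 * 1 + 1) / Real.sqrt 3)) / 3 +
      (-(Real.log ((1:ℝ) ^ 2 + 1 + 1) / 2) +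
        Real.sqrt 3 * Real.arctan ((2 * 1 + 1) / Real.sqrt 3) -
        Real.sqrt 3 * (Real.pi / 6)) / (3 * 1)) := by
    simp only [Haux, Faux, Caux]
    norm_num [Real.log_zero]
    ring
  rw [Filter.tendsto_congr' hee, hD1]
  exact h1.add h2

lemma contHaux : ContinuousOn Haux (Set.Icc 0 1) := by
  intro x hx
  rcases eq_or_lt_of_le hx.1 with h0 | h0
  · -- x = 0
    subst h0
    rw [← continuousWithinAt_diff_self]
    have hsub : Set.Icc (0:ℝ) 1 \ {0} ⊆ {(0:ℝ)}ᶜ := fun y hy => hy.2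
    exact tendsto_Haux_zero.mono_left (nhdsWithin_mono _ hsub)
  rcases eq_or_lt_of_le hx.2 with h1 | h1
  · -- x = 1
    subst h1
    rw [← continuousWithinAt_diff_self]
    have hsub : Set.Icc (0:ℝ) 1 \ {1} ⊆ Set.Iio 1 := fun y hy =>
      lt_of_le_of_ne hy.1.2 (by simpa using hy.2)
    exact tendsto_Haux_one.mono_left (nhdsWithin_mono _ hsub)
  · exact ((hasDerivAt_Haux ⟨h0, h1⟩).continuousAt).continuousWithinAt

theorem double_integral_pi_div_three_sqrt_three :
    (∫ x in (0:ℝ)..1, ∫ y in (0:ℝ)..1, y / (1 - x ^ 3 * y ^ 3)) =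
      Real.pi / (3 * Real.sqrt 3) := by
  have hs := sqrt3_pos
  have hnn : ∀ x ∈ Set.Ioo (0:ℝ) 1, 0 ≤ Faux x / x ^ 2 := by
    intro x hx
    rw [← inner_eq_s12 hx]
    apply intervalIntegral.integral_nonneg zero_le_one
    intro y hy
    obtain ⟨hy0, hy1⟩ := hy
    have hden : (0:ℝ) < 1 - x ^ 3 * y ^ 3 := by
      have hy3 : y ^ 3 ≤ 1 := pow_le_one₀ hy0 hy1
      have hx3 : x ^ 3 < 1 := pow_lt_one₀ hx.1.le hx.2 (by norm_num)
      have : x ^ 3 * y ^ 3 ≤ x ^ 3 := by nlinarith [pow_nonneg hy0 3, pow_nonneg hx.1.le 3]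
      nlinarith
    exact div_nonneg hy0 hden.le
  have hderiv : ∀ x ∈ Set.Ioo (0:ℝ) 1, HasDerivAt Haux (Faux x / x ^ 2) x :=
    fun x hx => hasDerivAt_Haux hx
  have hint : IntervalIntegrable (fun x => Faux x / x ^ 2) volume 0 1 := by
    apply intervalIntegral.intervalIntegrable_deriv_of_nonneg
    · rw [Set.uIcc_of_le zero_le_one]; exact contHaux
    · simpa using hderiv
    · simpa using hnn
  have hFTC : (∫ x in (0:ℝ)..1, Faux x / x ^ 2) = Haux 1 - Haux 0 :=
    intervalIntegral.integral_eq_sub_of_hasDeriv_right_of_le zero_le_one contHaux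
      (fun x hx => (hderiv x hx).hasDerivWithinAt) hint
  have hne1 : ∀ᵐ x : ℝ ∂volume, x ∉ ({1} : Set ℝ) :=
    measure_eq_zero_iff_ae_notMem.mp (measure_singleton 1)
  have hcong : (∫ x in (0:ℝ)..1, ∫ y in (0:ℝ)..1, y / (1 - x ^ 3 * y ^ 3)) =
      ∫ x in (0:ℝ)..1, Faux x / x ^ 2 := by
    apply intervalIntegral.integral_congr_ae
    filter_upwards [hne1] with x hx1 hxI
    rw [Set.uIoc_of_le zero_le_one] at hxI
    have hx : x ∈ Set.Ioo (0:ℝ) 1 :=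
      ⟨hxI.1, lt_of_le_of_ne hxI.2 (by simpa using hx1)⟩
    exact inner_eq_s12 hx
  rw [hcong, hFTC]
  have a1 : Real.arctan ((2 * (1:ℝ) + 1) / Real.sqrt 3) = Real.pi / 3 := by
    have h : (2 * (1:ℝ) + 1) / Real.sqrt 3 = Real.sqrt 3 := by
      rw [div_eq_iff hs.ne', Real.mul_self_sqrt (by norm_num)]
      norm_num
    rw [h, arctan_sqrt3]
  have a0 : Real.arctan ((2 * (0:ℝ) + 1) / Real.sqrt 3) = Real.pi / 6 := by
    have h : (2 * (0:ℝ) + 1) / Real.sqrt 3 = 1 / Real.sqrt 3 := by norm_num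
    rw [h, arctan_inv_sqrt3]
  have hmul : Real.sqrt 3 * Real.sqrt 3 = 3 := Real.mul_self_sqrt (by norm_num)
  simp only [Haux, Faux, Caux]
  rw [show ((1:ℝ) - 1) = 0 by norm_num, Real.log_zero]
  norm_num [a1, a0, Real.log_one, arctan_sqrt3, arctan_inv_sqrt3]
  rw [eq_div_iff (by positivity : (3:ℝ) * Real.sqrt 3 ≠ 0)]
  linear_combination (Real.pi / 3) * hmul
end
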